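/- arXiv:0710.5911 — 6 statements merged into one kernel-verified Lean document; each statement's English description precedes it below -/
import Mathlib

section
/- Let m ≥ 2 and let n_1, …, n_m be m distinct positive integers. Define f_r(n) = (n+r-2)!/((r-1)!(n-1)!) for r ≥ 1. Then the determinant of the m×m matrix whose (i,j)-entry is f_j(n_i) equals (∏_{1≤i<j≤m} (n_j - n_i)) / (∏_{i=1}^{m-1} i!). -/
/-!
Since `C(n + j - 1, j) = n (n + 1) ⋯ (n + j - 1) / j!`, column `j` of the matrix is the monic
degree-`j` polynomial `ascPochhammer j` evaluated at the `n i`, scaled by `1 / j!`. Pulling out the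
column scalars leaves a matrix of monic polynomials of degrees `0, 1, …, m - 1` evaluated at the
`n i`; column operations reduce it to the Vandermonde matrix of the `n i`.
-/

open Finset Matrix Polynomial
open scoped Nat

theorem Nat.cast_choose_add_sub_one_eq_ascPochhammer_div {K : Type*} [Field K] [CharZero K]
    (a b : ℕ) :
    ((a + b - 1).choose b : K) = (ascPochhammer K b).eval (a : K) / b ! := by
  rw [ascPochhammer_nat_eq_natCast_ascFactorial, Nat.ascFactorial_eq_factorial_mul_choose',
    Nat.cast_mul, mul_div_cancel_left₀ _ (Nat.cast_ne_zero.2 b.factorial_ne_zero)]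

theorem Matrix.det_of_eval_ascPochhammer {R : Type*} [CommRing R] [IsDomain R] {m : ℕ}
    (v : Fin m → R) :
    (of fun i j : Fin m => (ascPochhammer R j).eval (v i)).det =
      ∏ i : Fin m, ∏ j ∈ Ioi i, (v j - v i) := by
  rw [← det_eval_matrixOfPolynomials_eq_det_vandermonde v (fun j => ascPochhammer R j)
    (fun j => ascPochhammer_natDegree R j) (fun j => monic_ascPochhammer R j), det_vandermonde]

theorem Finset.prod_prod_Ioi_eq_prod_prod_Iio {ι M : Type*} [LinearOrder ι] [Fintype ι]
    [LocallyFiniteOrderTop ι] [LocallyFiniteOrderBot ι] [CommMonoid M] (f : ι → ι → M) :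
    ∏ i, ∏ j ∈ Ioi i, f i j = ∏ j, ∏ i ∈ Iio j, f i j :=
  prod_comm' fun _ _ => by simp

theorem Fin.prod_factorial_eq_prod_Icc (m : ℕ) :
    ∏ j : Fin m, (j : ℕ)! = ∏ i ∈ Icc 1 (m - 1), i ! := by
  rw [Fin.prod_univ_eq_prod_range (fun j => j !)]
  cases m <;> simp

theorem det_f_matrix_general (m : ℕ) (n : Fin m → ℕ) :
    Matrix.det (Matrix.of fun i j : Fin m =>
        (Nat.choose (n i + (j : ℕ) + 1 - 2) ((j : ℕ) + 1 - 1) : ℚ)) =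
      (∏ j : Fin m, ∏ i ∈ Finset.Iio j, ((n j : ℚ) - (n i : ℚ))) /
        (∏ i ∈ Finset.Icc 1 (m - 1), (Nat.factorial i : ℚ)) := by
  have hentries : (of fun i j : Fin m =>
      (Nat.choose (n i + (j : ℕ) + 1 - 2) ((j : ℕ) + 1 - 1) : ℚ)) =
      of fun i j : Fin m => ((j : ℕ)! : ℚ)⁻¹ *
        of (fun i j : Fin m => (ascPochhammer ℚ j).eval (n i : ℚ)) i j := by
    ext i j
    rw [of_apply, of_apply, of_apply, show n i + j + 1 - 2 = n i + j - 1 by omega,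
      Nat.add_sub_cancel,
      Nat.cast_choose_add_sub_one_eq_ascPochhammer_div, div_eq_inv_mul]
  rw [hentries, det_mul_row, det_of_eval_ascPochhammer, prod_prod_Ioi_eq_prod_prod_Iio,
    prod_inv_distrib, ← Nat.cast_prod, Fin.prod_factorial_eq_prod_Icc, Nat.cast_prod,
    div_eq_inv_mul]

/-- Determinant of the matrix with entries `f_j(n_i) = C(n_i + j - 2, j - 1)`. -/
theorem det_f_matrix (m : ℕ) (hm : 2 ≤ m) (n : Fin m → ℕ)
    (hpos : ∀ i, 1 ≤ n i) (hinj : Function.Injective n) :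
    Matrix.det (Matrix.of fun i j : Fin m =>
        (Nat.choose (n i + (j : ℕ) + 1 - 2) ((j : ℕ) + 1 - 1) : ℚ)) =
      (∏ j : Fin m, ∏ i ∈ Finset.Iio j, ((n j : ℚ) - (n i : ℚ))) /
        (∏ i ∈ Finset.Icc 1 (m - 1), (Nat.factorial i : ℚ)) :=
  det_f_matrix_general m n
end

section
/- Let m ≥ 2 and let n_1, …, n_m be m distinct positive integers. Then the vectors v_i = (f_1(n_i), f_2(n_i), …, f_m(n_i)) ∈ ℚ^m, for i = 1,…,m, are linearly independent over ℚ. -/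
/-!
Write `f_{j+1}(a) = binom(a+j-1, j) = a(a+1)⋯(a+j-1)/j!`, the rising factorial of `a` divided by
`j!`. The matrix `(f_{j+1}(n_i))` is therefore the matrix of evaluations of the monic degree-`j`
polynomials `ascPochhammer j` at the points `n_i`, with column `j` scaled by `1/j!`. Such a matrix
has the Vandermonde determinant of the `n_i` (times `∏ 1/j!`), which is nonzero as the `n_i` are
distinct.
-/

open Polynomial Matrix Nat

theorem Nat.cast_choose_add_sub_one_eq_ascPochhammer_eval_div {K : Type*} [DivisionSemiring K]
    [CharZero K] (a j : ℕ) :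
    ((a + j - 1).choose j : K) = (ascPochhammer K j).eval (a : K) / j ! := by
  rcases Nat.eq_zero_or_pos j with rfl | hj
  · simp
  · rw [Nat.cast_choose_eq_ascPochhammer_div]
    congr 3
    omega

theorem Matrix.det_of_eval_monic_ne_zero {R : Type*} [CommRing R] [IsDomain R] {m : ℕ}
    {x : Fin m → R} (hx : Function.Injective x) {p : Fin m → R[X]}
    (hdeg : ∀ j, (p j).natDegree = j) (hmonic : ∀ j, (p j).Monic) :
    (of fun i j => (p j).eval (x i)).det ≠ 0 := by
  rw [← det_eval_matrixOfPolynomials_eq_det_vandermonde x p hdeg hmonic]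
  exact det_vandermonde_ne_zero_iff.mpr hx

theorem linearIndependent_mul_eval_of_monic {R : Type*} [CommRing R] [IsDomain R] {m : ℕ}
    {x : Fin m → R} (hx : Function.Injective x) {p : Fin m → R[X]}
    (hdeg : ∀ j, (p j).natDegree = j) (hmonic : ∀ j, (p j).Monic) {c : Fin m → R}
    (hc : ∀ j, c j ≠ 0) :
    LinearIndependent R (fun i j => c j * (p j).eval (x i)) := by
  apply linearIndependent_rows_of_det_ne_zero (A := of fun i j => c j * (p j).eval (x i))
  have hdet := det_mul_row c (of fun i j => (p j).eval (x i))
  simp only [of_apply] at hdet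
  rw [hdet]
  exact mul_ne_zero (Finset.prod_ne_zero_iff.mpr fun j _ => hc j)
    (det_of_eval_monic_ne_zero hx hdeg hmonic)

theorem f_vectors_linearIndependent_general (m : ℕ) (n : Fin m → ℕ)
    (hinj : Function.Injective n) :
    LinearIndependent ℚ (fun i : Fin m => fun j : Fin m =>
      (Nat.choose (n i + (j : ℕ) + 1 - 2) ((j : ℕ) + 1 - 1) : ℚ)) := by
  have hentry (a j : ℕ) : ((a + j + 1 - 2).choose (j + 1 - 1) : ℚ) =
      (j ! : ℚ)⁻¹ * (ascPochhammer ℚ j).eval (a : ℚ) := by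
    rw [show a + j + 1 - 2 = a + j - 1 by omega, Nat.add_sub_cancel,
      cast_choose_add_sub_one_eq_ascPochhammer_eval_div, div_eq_inv_mul]
  simp_rw [hentry]
  exact linearIndependent_mul_eval_of_monic (Nat.cast_injective.comp hinj)
    (fun j => ascPochhammer_natDegree ℚ j) (fun j => monic_ascPochhammer ℚ j)
    (fun j => by positivity)

/-- The vectors `v_i = (f_1(n_i), …, f_m(n_i))` are linearly independent over `ℚ`. -/
theorem f_vectors_linearIndependent (m : ℕ) (hm : 2 ≤ m) (n : Fin m → ℕ)
    (hpos : ∀ i, 1 ≤ n i) (hinj : Function.Injective n) :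
    LinearIndependent ℚ (fun i : Fin m => fun j : Fin m =>
      (Nat.choose (n i + (j : ℕ) + 1 - 2) ((j : ℕ) + 1 - 1) : ℚ)) :=
  f_vectors_linearIndependent_general m n hinj
end

section
/- Let A, N, B, M be positive integers with A/N ≠ B/M. Then there exist polynomials g(x,t), h(x,t) ∈ ℤ[x,t] and a positive integer k such that g(x,t)·(1 - x^A t^N) + h(x,t)·(1 - x^B t^M) = 1 - x^k in ℤ[x,t]. -/
open Polynomial

lemma aux_bezout (A N B M k : ℕ) (hk : A * M = k + B * N) :
    ∃ g h' : Polynomial (Polynomial ℤ),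
      g * (1 - (C X) ^ A * X ^ N) + h' * (1 - (C X) ^ B * X ^ M)
        = 1 - (C X) ^ k := by
  set u : Polynomial (Polynomial ℤ) := (C X) ^ A * X ^ N with hu
  set v : Polynomial (Polynomial ℤ) := (C X) ^ B * X ^ M with hv
  refine ⟨∑ i ∈ Finset.range M, u ^ i, -((C X : Polynomial (Polynomial ℤ)) ^ k) * ∑ i ∈ Finset.range N, v ^ i, ?_⟩
  have h1 : (∑ i ∈ Finset.range M, u ^ i) * (u - 1) = u ^ M - 1 := geom_sum_mul u M
  have h2 : (∑ i ∈ Finset.range N, v ^ i) * (v - 1) = v ^ N - 1 := geom_sum_mul v N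
  have huv : u ^ M = (C X) ^ k * v ^ N := by
    rw [hu, hv, mul_pow, mul_pow, ← pow_mul, ← pow_mul, ← pow_mul, ← pow_mul,
      Nat.mul_comm N M, hk, pow_add, mul_assoc]
  have e1 : (∑ i ∈ Finset.range M, u ^ i) * (1 - u) = 1 - u ^ M := by
    have := h1; ring_nf at this ⊢; linear_combination -this
  have e2 : (∑ i ∈ Finset.range N, v ^ i) * (1 - v) = 1 - v ^ N := by
    have := h2; ring_nf at this ⊢; linear_combination -this
  have key : (∑ i ∈ Finset.range M, u ^ i) * (1 - u)
        + (-((C X : Polynomial (Polynomial ℤ)) ^ k) * ∑ i ∈ Finset.range N, v ^ i) * (1 - v)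
      = (1 - u ^ M) - (C X : Polynomial (Polynomial ℤ)) ^ k * (1 - v ^ N) := by
    linear_combination e1 - ((C X : Polynomial (Polynomial ℤ)) ^ k) * e2
  rw [key, huv]; ring

/-- Bezout-type relation for `1 - x^A t^N` and `1 - x^B t^M` in `ℤ[x][t]`. -/
theorem bezout_one_sub_pow (A N B M : ℕ) (hA : 0 < A) (hN : 0 < N) (hB : 0 < B)
    (hM : 0 < M) (h : (A : ℚ) / N ≠ (B : ℚ) / M) :
    ∃ (g h' : Polynomial (Polynomial ℤ)) (k : ℕ), 0 < k ∧
      g * (1 - (C X) ^ A * X ^ N) + h' * (1 - (C X) ^ B * X ^ M)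
        = 1 - (C X) ^ k := by
  have hne : A * M ≠ B * N := by
    intro heq
    apply h
    rw [div_eq_div_iff (by exact_mod_cast hN.ne') (by exact_mod_cast hM.ne')]
    exact_mod_cast heq
  rcases lt_or_gt_of_ne hne with hlt | hgt
  · obtain ⟨g, h', e⟩ := aux_bezout B M A N (B * N - A * M) (by omega)
    exact ⟨h', g, B * N - A * M, by omega, by rw [add_comm]; exact e⟩
  · obtain ⟨g, h', e⟩ := aux_bezout A N B M (A * M - B * N) (by omega)
    exact ⟨g, h', A * M - B * N, by omega, e⟩
end

section
/- Let R' be a commutative ring and L ∈ R'. Define the ideal I = ∩_{k≥0} { α ∈ R' : ∃ n ∈ ℤ \ {0} with n·α ∈ (L^k) } and set R = R'/I with L̄ the image of L. Then ∩_{k≥0} (L̄^k) = {0} in R. -/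
/-- In `R = R'/I` with `I = ⋂_k {α | ∃ n ≠ 0, n·α ∈ (L^k)}`, one has
`⋂_k (L̄^k) = {0}`. -/
theorem inter_pow_ideal_eq_bot (R' : Type*) [CommRing R'] (L : R')
    (I : Ideal R')
    (hI : ∀ α : R', α ∈ I ↔
      ∀ k : ℕ, ∃ n : ℤ, n ≠ 0 ∧ n • α ∈ Ideal.span {L ^ k})
    (β : R' ⧸ I)
    (h : ∀ k : ℕ, β ∈ Ideal.span {(Ideal.Quotient.mk I L) ^ k}) : β = 0 := by
  obtain ⟨α, rfl⟩ := Ideal.Quotient.mk_surjective β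
  rw [Ideal.Quotient.eq_zero_iff_mem, hI]
  intro k
  have hk := h k
  rw [← map_pow, Ideal.mem_span_singleton] at hk
  obtain ⟨c, hc⟩ := hk
  obtain ⟨r, rfl⟩ := Ideal.Quotient.mk_surjective c
  rw [← map_mul, Ideal.Quotient.mk_eq_mk_iff_sub_mem] at hc
  obtain ⟨n, hn0, hn⟩ := (hI _).mp hc k
  refine ⟨n, hn0, ?_⟩
  have : n • α = n • (α - L ^ k * r) + n • (L ^ k * r) := by
    rw [← smul_add, sub_add_cancel]
  rw [this]
  exact Ideal.add_mem _ hn (zsmul_mem (Ideal.mem_span_singleton.mpr ⟨r, rfl⟩) n)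
end

section
/- Let d ≥ 2 and n ≥ 0 be integers, let r = ⌈n/2⌉ (i.e. r = n/2 if n is even and (n+1)/2 if n is odd), and let k be an integer with 0 ≤ k ≤ r - 1. Then (d-1)(n-2k) + dk ≥ ⌈dn/2⌉. -/
/-- Key numerical estimate: `(d-1)(n-2k) + dk ≥ ⌈dn/2⌉`. -/
theorem key_estimate (d n r k : ℤ) (hd : 2 ≤ d) (hn : 0 ≤ n)
    (hr : r = ⌈(n : ℚ) / 2⌉) (hk0 : 0 ≤ k) (hk : k ≤ r - 1) :
    (d - 1) * (n - 2 * k) + d * k ≥ ⌈((d * n : ℤ) : ℚ) / 2⌉ := by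
  have h1 : ((r : ℚ)) < (n : ℚ) / 2 + 1 := by
    rw [hr]; push_cast; exact Int.ceil_lt_add_one _
  have h2 : 2 * k ≤ n - 1 := by
    have hlt : 2 * k < n := by
      have : (2 * (k : ℚ)) < (n : ℚ) := by
        have hk' : (k : ℚ) ≤ (r : ℚ) - 1 := by exact_mod_cast hk
        linarith
      exact_mod_cast this
    omega
  rw [ge_iff_le, Int.ceil_le]
  push_cast
  rw [div_le_iff₀ (by norm_num : (0:ℚ) < 2)]
  have h3 : ((d : ℚ) - 2) * ((n : ℚ) - 2 * k) ≥ 0 := by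
    have : (2 : ℚ) ≤ (d : ℚ) := by exact_mod_cast hd
    have h2' : 2 * (k : ℚ) ≤ (n : ℚ) - 1 := by exact_mod_cast h2
    nlinarith
  nlinarith [h3]
end

section
/- Let R be a commutative ring, L ∈ R, d ≥ 1 an integer, and β a nonnegative rational. Suppose Z(t) = B(t) / ∏_{i∈I} (1 - L^{a_i} t^{N_i}) in R[[t]], where I is a finite set, B(t) ∈ R[t] is a polynomial of degree g, and for each i ∈ I the integers a_i ≥ 0, N_i ≥ 1 satisfy a_i ≥ β·N_i. Write Z(t) = Σ_{n≥0} γ_n t^n. Then for every n with n ≥ g, the coefficient γ_n is divisible by L^⌈β(n-g)⌉ in R. -/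
open PowerSeries

/-! Dividing by `1 - L^a t^N` turns coefficients `γ` into `γ'` with `γ'(n) = γ(n) + L^a γ'(n - N)`,
so a bound `L^(e n) ∣ γ(n)` passes to `γ'` by strong induction on `n` whenever
`e n ≤ a + e (n - N)`. The slope condition `β N ≤ a` gives this for `e n = ⌈β (n - g)⌉.toNat`,
which vanishes for `n ≤ g`, and `B` meets the bound because its coefficients vanish beyond `g`. -/

section

variable {R : Type*} [CommRing R]

theorem coeff_eq_coeff_mul_one_sub_add (Z : R⟦X⟧) (c : R) (N n : ℕ) :
    coeff n Z = coeff n (Z * (1 - C c * X ^ N)) + if N ≤ n then c * coeff (n - N) Z else 0 := by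
  rw [mul_sub, mul_one, map_sub, mul_left_comm, coeff_C_mul, mul_comm, coeff_mul_X_pow']
  split_ifs <;> ring

theorem pow_dvd_coeff_of_pow_dvd_coeff_mul_one_sub {L : R} {a N : ℕ} {e : ℕ → ℕ} (hN : 1 ≤ N)
    (he : ∀ n, N ≤ n → e n ≤ a + e (n - N)) {Z : R⟦X⟧}
    (hZ : ∀ n, L ^ e n ∣ coeff n (Z * (1 - C (L ^ a) * X ^ N))) (n : ℕ) :
    L ^ e n ∣ coeff n Z := by
  induction n using Nat.strong_induction_on with
  | _ n ih =>
    rw [coeff_eq_coeff_mul_one_sub_add]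
    refine dvd_add (hZ n) ?_
    split_ifs with hn
    · calc L ^ e n ∣ L ^ (a + e (n - N)) := pow_dvd_pow L (he n hn)
        _ = L ^ a * L ^ e (n - N) := pow_add L _ _
        _ ∣ L ^ a * coeff (n - N) Z := mul_dvd_mul_left _ (ih _ (by omega))
    · exact dvd_zero _

theorem pow_dvd_coeff_of_pow_dvd_coeff_mul_prod {ι : Type*} (s : Finset ι) {L : R}
    {a N : ι → ℕ} {e : ℕ → ℕ} (hN : ∀ i ∈ s, 1 ≤ N i)
    (he : ∀ i ∈ s, ∀ n, N i ≤ n → e n ≤ a i + e (n - N i)) {Z : R⟦X⟧}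
    (hZ : ∀ n, L ^ e n ∣ coeff n (Z * ∏ i ∈ s, (1 - C (L ^ a i) * X ^ N i))) :
    ∀ n, L ^ e n ∣ coeff n Z := by
  classical
  induction s using Finset.induction generalizing Z with
  | empty => simpa using hZ
  | insert i s hi ih =>
    simp only [Finset.mem_insert, forall_eq_or_imp] at hN he
    rw [Finset.prod_insert hi, ← mul_assoc] at hZ
    exact pow_dvd_coeff_of_pow_dvd_coeff_mul_one_sub hN.1 he.1 (ih hN.2 he.2 hZ)

end

theorem toNat_ceil_mul_sub_le {β : ℚ} {a N : ℕ} (ha : β * N ≤ a) (g n : ℕ) (hn : N ≤ n) :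
    ⌈β * ((n : ℚ) - g)⌉.toNat ≤ a + ⌈β * (((n - N : ℕ) : ℚ) - g)⌉.toNat := by
  have hsplit : β * ((n : ℚ) - g) = β * N + β * (((n - N : ℕ) : ℚ) - g) := by
    push_cast [Nat.cast_sub hn]; ring
  have hceil : ⌈β * ((n : ℚ) - g)⌉ ≤ a + ⌈β * (((n - N : ℕ) : ℚ) - g)⌉ :=
    hsplit ▸ (Int.ceil_add_le _ _).trans (add_le_add_left (Int.ceil_le.2 (by exact_mod_cast ha)) _)
  omega

theorem toNat_ceil_mul_sub_eq_zero {β : ℚ} (hβ : 0 ≤ β) {g n : ℕ} (hn : n ≤ g) :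
    ⌈β * ((n : ℚ) - g)⌉.toNat = 0 := by
  have : β * ((n : ℚ) - g) ≤ 0 :=
    mul_nonpos_of_nonneg_of_nonpos hβ (sub_nonpos.2 (by exact_mod_cast hn))
  simpa using Int.ceil_le.2 (by simpa using this)

theorem coeff_divisibility_general (R : Type*) [CommRing R] (L : R)
    (β : ℚ) (hβ : 0 ≤ β) (ι : Type*) (s : Finset ι) (a N : ι → ℕ)
    (hN : ∀ i ∈ s, 1 ≤ N i) (ha : ∀ i ∈ s, β * (N i) ≤ a i)
    (B : Polynomial R) (g : ℕ) (hg : B.natDegree = g)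
    (Z : PowerSeries R)
    (hZ : Z * ∏ i ∈ s, (1 - PowerSeries.C (L ^ a i) * PowerSeries.X ^ N i)
        = (B : PowerSeries R)) :
    ∀ n : ℕ, g ≤ n →
      PowerSeries.coeff n Z ∈ Ideal.span {L ^ (⌈β * ((n : ℚ) - g)⌉.toNat)} := by
  have hB : ∀ m : ℕ, L ^ ⌈β * ((m : ℚ) - g)⌉.toNat ∣ coeff m (B : R⟦X⟧) := by
    intro m
    rw [Polynomial.coeff_coe]
    rcases le_or_gt m g with hm | hm
    · simp [toNat_ceil_mul_sub_eq_zero hβ hm]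
    · simp [Polynomial.coeff_eq_zero_of_natDegree_lt (hg ▸ hm)]
  have hdvd := pow_dvd_coeff_of_pow_dvd_coeff_mul_prod s hN
    (fun i hi => toNat_ceil_mul_sub_le (ha i hi) g) (hZ ▸ hB)
  exact fun n _ => Ideal.mem_span_singleton.2 (hdvd n)

/-- Proposition 4.3 (abstract form): slope bounds force `L`-divisibility of the
coefficients of `Z(t)`. -/
theorem coeff_divisibility (R : Type*) [CommRing R] (L : R) (d : ℕ) (hd : 1 ≤ d)
    (β : ℚ) (hβ : 0 ≤ β) (ι : Type*) (s : Finset ι) (a N : ι → ℕ)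
    (hN : ∀ i ∈ s, 1 ≤ N i) (ha : ∀ i ∈ s, β * (N i) ≤ a i)
    (B : Polynomial R) (g : ℕ) (hg : B.natDegree = g)
    (Z : PowerSeries R)
    (hZ : Z * ∏ i ∈ s, (1 - PowerSeries.C (L ^ a i) * PowerSeries.X ^ N i)
        = (B : PowerSeries R)) :
    ∀ n : ℕ, g ≤ n →
      PowerSeries.coeff n Z ∈ Ideal.span {L ^ (⌈β * ((n : ℚ) - g)⌉.toNat)} :=
  coeff_divisibility_general R L β hβ ι s a N hN ha B g hg Z hZ
end
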